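/- Let 𝒦 ⊆ 𝒢 be a Lie subalgebra and N ⊆ V a 𝒦-invariant subspace (𝔨·N ⊆ N for all 𝔨 ∈ 𝒦). Let 𝒦̂ and N̂ be the spans of the leading terms of the nonzero elements of 𝒦 and of N respectively. Then N̂ is 𝒦̂-invariant, i.e. 𝔨·N̂ ⊆ N̂ for every 𝔨 ∈ 𝒦̂, and dim_ℂ(N̂) = dim_ℂ(N). -/

import Mathlib

open DirectSum Module

set_option synthInstance.maxHeartbeats 1000000
set_option maxHeartbeats 1000000

/-- The degree-`i` homogeneous component of `v` with respect to the grading `𝒲`. -/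
noncomputable def grComp {W : Type*} [AddCommGroup W] [Module ℂ W]
    (𝒲 : ℤ → Submodule ℂ W) [Decomposition 𝒲] (v : W) (i : ℤ) : W :=
  ((decompose 𝒲 v) i : W)

/-- `IsLead 𝒲 v d z` : `z` is the leading term of `v`, of degree `d`. -/
def IsLead {W : Type*} [AddCommGroup W] [Module ℂ W]
    (𝒲 : ℤ → Submodule ℂ W) [Decomposition 𝒲] (v : W) (d : ℤ) (z : W) : Prop :=
  grComp 𝒲 v d = z ∧ z ≠ 0 ∧ ∀ i < d, grComp 𝒲 v i = 0

/-- The span of the leading terms of nonzero elements of a subspace `M`. -/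
noncomputable def hatSub {W : Type*} [AddCommGroup W] [Module ℂ W]
    (𝒲 : ℤ → Submodule ℂ W) [Decomposition 𝒲] (M : Submodule ℂ W) : Submodule ℂ W :=
  Submodule.span ℂ {z | ∃ v ∈ M, v ≠ 0 ∧ ∃ d : ℤ, IsLead 𝒲 v d z}

section Helpers

variable {W : Type*} [AddCommGroup W] [Module ℂ W]
    (𝒲 : ℤ → Submodule ℂ W) [Decomposition 𝒲]

/-- `grComp` as a linear map. -/
noncomputable def grLin (i : ℤ) : W →ₗ[ℂ] W :=
  (𝒲 i).subtype ∘ₗ (DirectSum.component ℂ ℤ (fun j => 𝒲 j) i) ∘ₗ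
    (decomposeLinearEquiv 𝒲).toLinearMap

lemma grLin_apply (i : ℤ) (v : W) : grLin 𝒲 i v = grComp 𝒲 v i := rfl

lemma grComp_mem (v : W) (i : ℤ) : grComp 𝒲 v i ∈ 𝒲 i := ((decompose 𝒲 v) i).2

lemma grComp_of_mem_same {v : W} {i : ℤ} (h : v ∈ 𝒲 i) : grComp 𝒲 v i = v :=
  decompose_of_mem_same 𝒲 h

lemma grComp_of_mem_ne {v : W} {i j : ℤ} (h : v ∈ 𝒲 i) (hij : i ≠ j) : grComp 𝒲 v j = 0 :=
  decompose_of_mem_ne 𝒲 h hij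

/-- Uniform lower bound on degrees of components of elements of a f.d. subspace. -/
lemma exists_lowbound [FiniteDimensional ℂ W] (M : Submodule ℂ W) :
    ∃ b : ℤ, ∀ v ∈ M, ∀ i < b, grComp 𝒲 v i = 0 := by
  classical
  obtain ⟨s, hs⟩ := (IsNoetherian.noetherian M)
  set T : Finset ℤ := s.sup (fun w => (decompose 𝒲 w).support) with hT
  obtain ⟨b, hb⟩ : ∃ b : ℤ, ∀ i ∈ T, b ≤ i := by
    rcases T.eq_empty_or_nonempty with h | h
    · exact ⟨0, by simp [h]⟩
    · exact ⟨T.min' h, fun i hi => T.min'_le i hi⟩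
  refine ⟨b, fun v hv i hi => ?_⟩
  have hker : M ≤ LinearMap.ker (grLin 𝒲 i) := by
    rw [← hs]
    refine Submodule.span_le.2 fun w hw => ?_
    have hiw : i ∉ (decompose 𝒲 w).support := by
      intro hmem
      have : i ∈ T := Finset.le_sup (f := fun w => (decompose 𝒲 w).support) hw hmem
      exact absurd (hb i this) (not_le.2 hi)
    have : (decompose 𝒲 w) i = 0 := DFinsupp.notMem_support_iff.1 hiw
    simp only [SetLike.mem_coe, LinearMap.mem_ker, grLin_apply, grComp]
    rw [this]; rfl
  have := hker hv
  rw [LinearMap.mem_ker, grLin_apply] at this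
  exact this

/-- Every nonzero vector has a leading term. -/
lemma exists_lead {v : W} (hv : v ≠ 0) :
    ∃ d : ℤ, grComp 𝒲 v d ≠ 0 ∧ ∀ i < d, grComp 𝒲 v i = 0 := by
  classical
  have hd : (decompose 𝒲 v) ≠ 0 := by
    intro h
    apply hv
    have h' : decomposeLinearEquiv 𝒲 v = 0 := by rw [decomposeLinearEquiv_apply]; exact h
    exact (LinearEquiv.map_eq_zero_iff _).1 h' 
  have hsupp : (decompose 𝒲 v).support.Nonempty := by
    rw [Finset.nonempty_iff_ne_empty, Ne, DFinsupp.support_eq_empty]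
    exact hd
  refine ⟨(decompose 𝒲 v).support.min' hsupp, ?_, ?_⟩
  · have : (decompose 𝒲 v) ((decompose 𝒲 v).support.min' hsupp) ≠ 0 :=
      DFinsupp.mem_support_iff.1 ((decompose 𝒲 v).support.min'_mem hsupp)
    simpa [grComp, ZeroMemClass.coe_eq_zero] using this
  · intro i hi
    have : i ∉ (decompose 𝒲 v).support := by
      intro hmem
      exact absurd ((decompose 𝒲 v).support.min'_le i hmem) (not_le.2 hi)
    have h0 : (decompose 𝒲 v) i = 0 := DFinsupp.notMem_support_iff.1 this
    simp [grComp, h0]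

lemma hatSub_bot : hatSub 𝒲 (⊥ : Submodule ℂ W) = ⊥ := by
  have : {z : W | ∃ v ∈ (⊥ : Submodule ℂ W), v ≠ 0 ∧ ∃ d : ℤ, IsLead 𝒲 v d z} = ∅ := by
    ext z
    simp only [Set.mem_setOf_eq, Submodule.mem_bot, Set.mem_empty_iff_false, iff_false]
    rintro ⟨v, rfl, hv, -⟩
    exact hv rfl
  rw [hatSub, this, Submodule.span_empty]

lemma hatSub_mono {M M' : Submodule ℂ W} (h : M ≤ M') : hatSub 𝒲 M ≤ hatSub 𝒲 M' :=
  Submodule.span_mono fun z => fun ⟨v, hv, hv0, d, hd⟩ => ⟨v, h hv, hv0, d, hd⟩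

/-- The main dimension-counting lemma. -/
lemma finrank_hatSub [FiniteDimensional ℂ W] (M : Submodule ℂ W) :
    finrank ℂ (hatSub 𝒲 M) = finrank ℂ M := by
  classical
  suffices H : ∀ n : ℕ, ∀ M : Submodule ℂ W, finrank ℂ M ≤ n →
      finrank ℂ (hatSub 𝒲 M) = finrank ℂ M from H (finrank ℂ M) M le_rfl
  intro n
  induction n with
  | zero =>
    intro M hM
    have : M = ⊥ := Submodule.finrank_eq_zero.1 (Nat.le_zero.1 hM)
    rw [this, hatSub_bot]
  | succ n ih =>
    intro M hM
    by_cases hbot : M = ⊥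
    · rw [hbot, hatSub_bot]
    -- a least leading degree d
    obtain ⟨b, hb⟩ := exists_lowbound 𝒲 M
    obtain ⟨v0, hv0M, hv00⟩ := Submodule.exists_mem_ne_zero_of_ne_bot hbot
    set P : ℤ → Prop := fun d => ∃ v ∈ M, grComp 𝒲 v d ≠ 0 ∧ ∀ i < d, grComp 𝒲 v i = 0
    obtain ⟨d, ⟨v1, hv1M, hv1d, hv1low⟩, hdmin⟩ := Int.exists_least_of_bdd
      (P := P)
      ⟨b, fun z ⟨v, hv, hvz, _⟩ => by
        by_contra hle
        exact hvz (hb v hv z (not_le.1 hle))⟩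
      ⟨_, v0, hv0M, (exists_lead 𝒲 hv00).choose_spec.1, (exists_lead 𝒲 hv00).choose_spec.2⟩
    -- fact A : all of M vanishes below d
    have factA : ∀ v ∈ M, ∀ i < d, grComp 𝒲 v i = 0 := by
      intro v hv i hi
      by_contra hne
      have hv0 : v ≠ 0 := by rintro rfl; exact hne (by simp [grComp])
      obtain ⟨d', hd'ne, hd'low⟩ := exists_lead 𝒲 hv0
      have hPd' : P d' := ⟨v, hv, hd'ne, hd'low⟩
      have : d ≤ d' := hdmin d' hPd'
      have : d' ≤ i := by
        by_contra h
        exact hne (hd'low i (not_le.1 h))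
      omega
    set f : M →ₗ[ℂ] W := (grLin 𝒲 d) ∘ₗ M.subtype with hf
    set F : Submodule ℂ W := M ⊓ LinearMap.ker (grLin 𝒲 d) with hFdef
    have hFM : F ≤ M := inf_le_left
    have hFlt : F < M := lt_of_le_of_ne hFM (by
      intro h
      have : v1 ∈ F := h ▸ hv1M
      rw [hFdef, Submodule.mem_inf, LinearMap.mem_ker, grLin_apply] at this
      exact hv1d this.2)
    have hrankF : finrank ℂ F < finrank ℂ M := Submodule.finrank_lt_finrank_of_lt hFlt
    have ihF : finrank ℂ (hatSub 𝒲 F) = finrank ℂ F := ih F (by omega)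
    -- kernel of f is F
    have hker : LinearMap.ker f = F.comap M.subtype := by
      ext x
      simp only [LinearMap.mem_ker, hf, LinearMap.coe_comp, Function.comp_apply,
        Submodule.coe_subtype, Submodule.mem_comap, hFdef, Submodule.mem_inf]
      constructor
      · intro h; exact ⟨x.2, h⟩
      · intro h; exact h.2
    have hkerrank : finrank ℂ (LinearMap.ker f) = finrank ℂ F := by
      rw [hker]
      exact LinearEquiv.finrank_eq (Submodule.comapSubtypeEquivOfLe hFM)
    -- hatSub M = range f ⊔ hatSub F
    have hsup : hatSub 𝒲 M = LinearMap.range f ⊔ hatSub 𝒲 F := by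
      apply le_antisymm
      · refine Submodule.span_le.2 ?_
        rintro z ⟨v, hvM, hv0, e, hze, hz0, hzlow⟩
        have hde : d ≤ e := by
          by_contra h
          exact hz0 (hze ▸ factA v hvM e (not_le.1 h))
        rcases eq_or_lt_of_le hde with h | h
        · apply Submodule.mem_sup_left
          exact ⟨⟨v, hvM⟩, by rw [hf]; simp only [LinearMap.coe_comp, Function.comp_apply,
            Submodule.coe_subtype, grLin_apply]; rw [h, hze]⟩
        · apply Submodule.mem_sup_right
          apply Submodule.subset_span
          refine ⟨v, ?_, hv0, e, hze, hz0, hzlow⟩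
          rw [hFdef, Submodule.mem_inf, LinearMap.mem_ker, grLin_apply]
          exact ⟨hvM, hzlow d h⟩
      · refine sup_le ?_ (hatSub_mono 𝒲 hFM)
        rintro z ⟨⟨v, hvM⟩, rfl⟩
        have hz : f ⟨v, hvM⟩ = grComp 𝒲 v d := rfl
        rw [hz]
        by_cases h0 : grComp 𝒲 v d = 0
        · rw [h0]; exact zero_mem _
        · apply Submodule.subset_span
          have hv0 : v ≠ 0 := by rintro rfl; exact h0 (by simp [grComp])
          exact ⟨v, hvM, hv0, d, rfl, h0, factA v hvM⟩
    -- trivial intersection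
    have hdisj : LinearMap.range f ⊓ hatSub 𝒲 F = ⊥ := by
      rw [eq_bot_iff]
      rintro x ⟨hx1, hx2⟩
      have hx1' : x ∈ 𝒲 d := by
        obtain ⟨⟨v, hvM⟩, rfl⟩ := hx1
        exact grComp_mem 𝒲 v d
      have hFk : hatSub 𝒲 F ≤ LinearMap.ker (grLin 𝒲 d) := by
        refine Submodule.span_le.2 ?_
        rintro z ⟨w, hwF, hw0, e, hze, hz0, hzlow⟩
        have hed : e ≠ d := by
          rintro rfl
          rw [hFdef, Submodule.mem_inf, LinearMap.mem_ker, grLin_apply] at hwF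
          exact hz0 (hze ▸ hwF.2)
        have hzmem : z ∈ 𝒲 e := hze ▸ grComp_mem 𝒲 w e
        simp only [SetLike.mem_coe, LinearMap.mem_ker, grLin_apply]
        exact grComp_of_mem_ne 𝒲 hzmem hed
      have : grLin 𝒲 d x = 0 := hFk hx2
      rw [grLin_apply, grComp_of_mem_same 𝒲 hx1'] at this
      simp [this]
    have hrn := LinearMap.finrank_range_add_finrank_ker f
    have := Submodule.finrank_sup_add_finrank_inf_eq (LinearMap.range f) (hatSub 𝒲 F)
    rw [hdisj] at this
    simp only [finrank_bot, add_zero] at this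
    rw [hsup, this, ihF, ← hkerrank]
    omega

end Helpers

section Bracket

variable {L V : Type*} [LieRing L] [LieAlgebra ℂ L]
    [AddCommGroup V] [Module ℂ V]
    [LieRingModule L V] [LieModule ℂ L V]
    (𝒢 : ℤ → Submodule ℂ L) [Decomposition 𝒢]
    (𝒱 : ℤ → Submodule ℂ V) [Decomposition 𝒱]

lemma lie_sum' {ι : Type*} (s : Finset ι) (f : ι → L) (v : V) :
    ⁅∑ j ∈ s, f j, v⁆ = ∑ j ∈ s, ⁅f j, v⁆ := by
  have h : LieModule.toEnd ℂ L V (∑ j ∈ s, f j) = ∑ j ∈ s, LieModule.toEnd ℂ L V (f j) :=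
    map_sum (LieModule.toEnd ℂ L V) f s
  calc ⁅∑ j ∈ s, f j, v⁆ = LieModule.toEnd ℂ L V (∑ j ∈ s, f j) v := rfl
    _ = (∑ j ∈ s, LieModule.toEnd ℂ L V (f j)) v := by rw [h]
    _ = ∑ j ∈ s, ⁅f j, v⁆ := by
        rw [LinearMap.sum_apply]
        exact Finset.sum_congr rfl fun j _ => rfl

lemma sum_lie' {ι : Type*} (x : L) (s : Finset ι) (f : ι → V) :
    ⁅x, ∑ i ∈ s, f i⁆ = ∑ i ∈ s, ⁅x, f i⁆ :=
  map_sum (LieModule.toEnd ℂ L V x) f s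

lemma low_zero (hact : ∀ (j i : ℤ), ∀ x ∈ 𝒢 j, ∀ v ∈ 𝒱 i, ⁅x, v⁆ ∈ 𝒱 (i + j))
    {x : L} {v : V} {d e : ℤ}
    (hx : ∀ j < d, grComp 𝒢 x j = 0) (hv : ∀ i < e, grComp 𝒱 v i = 0) :
    ∀ m < d + e, grComp 𝒱 ⁅x, v⁆ m = 0 := by
  classical
  intro m hm
  have hxe : x = ∑ j ∈ (decompose 𝒢 x).support, grComp 𝒢 x j :=
    (sum_support_decompose 𝒢 x).symm
  have hve : v = ∑ i ∈ (decompose 𝒱 v).support, grComp 𝒱 v i :=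
    (sum_support_decompose 𝒱 v).symm
  have hbr : ⁅x, v⁆ = ∑ j ∈ (decompose 𝒢 x).support, ∑ i ∈ (decompose 𝒱 v).support,
      ⁅grComp 𝒢 x j, grComp 𝒱 v i⁆ := by
    conv_lhs => rw [hxe, hve]
    rw [lie_sum']
    exact Finset.sum_congr rfl fun j _ => sum_lie' _ _ _
  rw [← grLin_apply, hbr, map_sum]
  refine Finset.sum_eq_zero fun j hj => ?_
  rw [map_sum]
  refine Finset.sum_eq_zero fun i hi => ?_
  have hjd : d ≤ j := by
    by_contra h
    have : (decompose 𝒢 x) j ≠ 0 := DFinsupp.mem_support_iff.1 hj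
    apply this
    have := hx j (not_le.1 h)
    rwa [grComp, ZeroMemClass.coe_eq_zero] at this
  have hie : e ≤ i := by
    by_contra h
    have : (decompose 𝒱 v) i ≠ 0 := DFinsupp.mem_support_iff.1 hi
    apply this
    have := hv i (not_le.1 h)
    rwa [grComp, ZeroMemClass.coe_eq_zero] at this
  have hmem : ⁅grComp 𝒢 x j, grComp 𝒱 v i⁆ ∈ 𝒱 (i + j) :=
    hact j i _ (grComp_mem 𝒢 x j) _ (grComp_mem 𝒱 v i)
  rw [grLin_apply]
  exact grComp_of_mem_ne 𝒱 hmem (by omega)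

lemma lead_bracket (hact : ∀ (j i : ℤ), ∀ x ∈ 𝒢 j, ∀ v ∈ 𝒱 i, ⁅x, v⁆ ∈ 𝒱 (i + j))
    {x : L} {v : V} {d e : ℤ}
    (hx : ∀ j < d, grComp 𝒢 x j = 0) (hv : ∀ i < e, grComp 𝒱 v i = 0) :
    grComp 𝒱 ⁅x, v⁆ (d + e) = ⁅grComp 𝒢 x d, grComp 𝒱 v e⁆ := by
  set X := grComp 𝒢 x d with hX
  set Ve := grComp 𝒱 v e with hVe
  have hXmem : X ∈ 𝒢 d := grComp_mem 𝒢 x d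
  have hVmem : Ve ∈ 𝒱 e := grComp_mem 𝒱 v e
  have hXlow : ∀ j < d, grComp 𝒢 X j = 0 := fun j hj =>
    grComp_of_mem_ne 𝒢 hXmem (by omega)
  have hVlow : ∀ i < e, grComp 𝒱 Ve i = 0 := fun i hi =>
    grComp_of_mem_ne 𝒱 hVmem (by omega)
  have hx'low : ∀ j < d + 1, grComp 𝒢 (x - X) j = 0 := by
    intro j hj
    have : grComp 𝒢 (x - X) j = grComp 𝒢 x j - grComp 𝒢 X j := by
      rw [← grLin_apply, ← grLin_apply, ← grLin_apply, map_sub]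
    rw [this]
    rcases lt_or_eq_of_le (Int.lt_add_one_iff.1 hj) with h | h
    · rw [hx j h, hXlow j h, sub_zero]
    · rw [h, grComp_of_mem_same 𝒢 hXmem, ← hX, sub_self]
  have hv'low : ∀ i < e + 1, grComp 𝒱 (v - Ve) i = 0 := by
    intro i hi
    have : grComp 𝒱 (v - Ve) i = grComp 𝒱 v i - grComp 𝒱 Ve i := by
      rw [← grLin_apply, ← grLin_apply, ← grLin_apply, map_sub]
    rw [this]
    rcases lt_or_eq_of_le (Int.lt_add_one_iff.1 hi) with h | h
    · rw [hv i h, hVlow i h, sub_zero]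
    · rw [h, grComp_of_mem_same 𝒱 hVmem, ← hVe, sub_self]
  have hsplit : ⁅x, v⁆ = ⁅X, Ve⁆ + ⁅X, v - Ve⁆ + ⁅x - X, v⁆ := by
    simp only [lie_sub, sub_lie]
    abel
  have h1 : grComp 𝒱 ⁅X, v - Ve⁆ (d + e) = 0 :=
    low_zero 𝒢 𝒱 hact hXlow hv'low (d + e) (by omega)
  have h2 : grComp 𝒱 ⁅x - X, v⁆ (d + e) = 0 :=
    low_zero 𝒢 𝒱 hact hx'low hv (d + e) (by omega)
  have h3 : grComp 𝒱 ⁅X, Ve⁆ (d + e) = ⁅X, Ve⁆ := by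
    apply grComp_of_mem_same 𝒱
    have := hact d e X hXmem Ve hVmem
    rwa [add_comm] at this
  calc grComp 𝒱 ⁅x, v⁆ (d + e)
      = grComp 𝒱 ⁅X, Ve⁆ (d + e) + grComp 𝒱 ⁅X, v - Ve⁆ (d + e)
        + grComp 𝒱 ⁅x - X, v⁆ (d + e) := by
        rw [← grLin_apply, hsplit, map_add, map_add, grLin_apply, grLin_apply, grLin_apply]
    _ = ⁅X, Ve⁆ := by rw [h1, h2, h3, add_zero, add_zero]

end Bracket

theorem statement4 {L V : Type*} [LieRing L] [LieAlgebra ℂ L] [FiniteDimensional ℂ L]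
    [AddCommGroup V] [Module ℂ V] [FiniteDimensional ℂ V]
    [LieRingModule L V] [LieModule ℂ L V]
    (𝒢 : ℤ → Submodule ℂ L) [Decomposition 𝒢]
    (𝒱 : ℤ → Submodule ℂ V) [Decomposition 𝒱]
    (hbr : ∀ (i j : ℤ), ∀ x ∈ 𝒢 i, ∀ y ∈ 𝒢 j, ⁅x, y⁆ ∈ 𝒢 (i + j))
    (hact : ∀ (j i : ℤ), ∀ x ∈ 𝒢 j, ∀ v ∈ 𝒱 i, ⁅x, v⁆ ∈ 𝒱 (i + j))
    (K : LieSubalgebra ℂ L) (N : Submodule ℂ V)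
    (hN : ∀ k ∈ K, ∀ n ∈ N, ⁅k, n⁆ ∈ N) :
    (∀ k ∈ hatSub 𝒢 K.toSubmodule, ∀ n ∈ hatSub 𝒱 N, ⁅k, n⁆ ∈ hatSub 𝒱 N) ∧
    finrank ℂ (hatSub 𝒱 N) = finrank ℂ N := by
  constructor
  · -- invariance
    have key : ∀ z ∈ {z : L | ∃ x ∈ K.toSubmodule, x ≠ 0 ∧ ∃ d : ℤ, IsLead 𝒢 x d z},
        ∀ w ∈ {w : V | ∃ v ∈ N, v ≠ 0 ∧ ∃ e : ℤ, IsLead 𝒱 v e w},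
        ⁅z, w⁆ ∈ hatSub 𝒱 N := by
      rintro z ⟨x, hxK, hx0, d, hzd, hz0, hzlow⟩ w ⟨v, hvN, hv0, e, hwe, hw0, hwlow⟩
      have hxv : ⁅x, v⁆ ∈ N := hN x hxK v hvN
      have hlead : grComp 𝒱 ⁅x, v⁆ (d + e) = ⁅z, w⁆ := by
        rw [lead_bracket 𝒢 𝒱 hact hzlow hwlow, hzd, hwe]
      by_cases hzw : ⁅z, w⁆ = 0
      · rw [hzw]; exact zero_mem _
      · apply Submodule.subset_span
        refine ⟨⁅x, v⁆, hxv, ?_, d + e, hlead, hzw, low_zero 𝒢 𝒱 hact hzlow hwlow⟩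
        rintro h
        rw [h] at hlead
        exact hzw (by rw [← hlead]; simp [grComp])
    have inner : ∀ z ∈ {z : L | ∃ x ∈ K.toSubmodule, x ≠ 0 ∧ ∃ d : ℤ, IsLead 𝒢 x d z},
        ∀ n ∈ hatSub 𝒱 N, ⁅z, n⁆ ∈ hatSub 𝒱 N := by
      intro z hz n hn
      induction hn using Submodule.span_induction with
      | mem w hw => exact key z hz w hw
      | zero => rw [lie_zero]; exact zero_mem _
      | add a b _ _ ha hb => rw [lie_add]; exact add_mem ha hb
      | smul c a _ ha => rw [lie_smul]; exact Submodule.smul_mem _ c ha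
    intro k hk n hn
    induction hk using Submodule.span_induction with
    | mem z hz => exact inner z hz n hn
    | zero => rw [zero_lie]; exact zero_mem _
    | add a b _ _ ha hb => rw [add_lie]; exact add_mem ha hb
    | smul c a _ ha => rw [smul_lie]; exact Submodule.smul_mem _ c ha
  · exact finrank_hatSub 𝒱 N
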